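/- Let Ω ⊆ ℝⁿ be an open set and β > 0. Let (p_j) be a sequence of real numbers with p_j > 4 and p_j → ∞, and let (λ_j) be real numbers with λ_j < 0 and (−λ_j)^{1/p_j} → β. For each j, let u_j : Ω → ℝ be a continuous positive viscosity solution of −Δ_{p_j} u_j = λ_j |u_j|^{p_j−2} u_j in Ω. Assume u_j → u locally uniformly on Ω, where u : Ω → ℝ is continuous and positive. Then u is a viscosity solution of −min{|∇u| − βu, Δ∞u} = 0 in Ω. -/

import Mathlib

/-!
Perturbing a test function `φ` that touches `u` at `x₀` by `∓|x - x₀|⁴` makes the contact strict,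
so extremum points `x_j` of `u_j - ψ` on a small closed ball converge to `x₀`, with
`u_j(x_j) → u(x₀)` and the first and second derivatives of `ψ` at `x_j` converging to those of `φ`
at `x₀`. With `g = |∇ψ(x_j)|` and `μ_j = (-λ_j)^{1/p_j}`, the viscosity inequality for `u_j` at
`x_j`, divided by `(p_j - 2) g^{p_j - 4}`, reads
`Δ∞ψ + g² Δψ / (p_j - 2) ≤ (μ_j u_j / g)^{p_j} g⁴ / ((p_j - 2) u_j)` at minima, and the reverse at
maxima. As `p_j → ∞` the right side tends to `0` if `|∇φ| > βu` and to `∞` if `|∇φ| < βu`: this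
gives `Δ∞φ ≤ 0` in the first case, excludes the second one at maxima, and then gives `Δ∞φ ≥ 0`.
Maxima reduce to minima by passing to `-u_j`, `-u`, `-φ`.
-/

open scoped Topology InnerProductSpace
open Filter

/-- The infinity Laplacian `Δ∞φ(x) = ⟨D²φ(x)·∇φ(x), ∇φ(x)⟩`. -/
noncomputable def infLap {n : ℕ} (φ : EuclideanSpace ℝ (Fin n) → ℝ)
    (x : EuclideanSpace ℝ (Fin n)) : ℝ :=
  ⟪(fderiv ℝ (gradient φ) x) (gradient φ x), gradient φ x⟫_ℝ

/-- The Laplacian `Δφ(x)`, the trace of the Hessian. -/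
noncomputable def lapl {n : ℕ} (φ : EuclideanSpace ℝ (Fin n) → ℝ)
    (x : EuclideanSpace ℝ (Fin n)) : ℝ :=
  ∑ i, ⟪(fderiv ℝ (gradient φ) x) (EuclideanSpace.single i 1), EuclideanSpace.single i (1:ℝ)⟫_ℝ

/-- The second-order expression `-|∇φ(x)|^{p-2} Δφ(x) - (p-2)|∇φ(x)|^{p-4} Δ∞φ(x)` appearing
in the viscosity formulation of `-Δ_p`, interpreted as `0` when `∇φ(x) = 0`. -/
noncomputable def pLapOp {n : ℕ} (p : ℝ) (φ : EuclideanSpace ℝ (Fin n) → ℝ)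
    (x : EuclideanSpace ℝ (Fin n)) : ℝ :=
  letI := Classical.propDecidable (gradient φ x = 0)
  if gradient φ x = 0 then 0
  else -(‖gradient φ x‖ ^ (p - 2) * lapl φ x)
        - (p - 2) * ‖gradient φ x‖ ^ (p - 4) * infLap φ x

/-- Viscosity supersolution of `-Δ_p u = λ|u|^{p-2}u` in `Ω`. -/
def IsViscSupersolPLap {n : ℕ} (p lam : ℝ) (Ω : Set (EuclideanSpace ℝ (Fin n)))
    (u : EuclideanSpace ℝ (Fin n) → ℝ) : Prop :=
  ∀ x₀ ∈ Ω, ∀ φ : EuclideanSpace ℝ (Fin n) → ℝ, ContDiffAt ℝ 2 φ x₀ → φ x₀ = u x₀ →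
    IsLocalMinOn (fun x => u x - φ x) Ω x₀ →
    0 ≤ pLapOp p φ x₀ - lam * |φ x₀| ^ (p - 2) * φ x₀

/-- Viscosity subsolution of `-Δ_p u = λ|u|^{p-2}u` in `Ω`. -/
def IsViscSubsolPLap {n : ℕ} (p lam : ℝ) (Ω : Set (EuclideanSpace ℝ (Fin n)))
    (u : EuclideanSpace ℝ (Fin n) → ℝ) : Prop :=
  ∀ x₀ ∈ Ω, ∀ φ : EuclideanSpace ℝ (Fin n) → ℝ, ContDiffAt ℝ 2 φ x₀ → φ x₀ = u x₀ →
    IsLocalMaxOn (fun x => u x - φ x) Ω x₀ →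
    pLapOp p φ x₀ - lam * |φ x₀| ^ (p - 2) * φ x₀ ≤ 0

/-- Viscosity solution of `-Δ_p u = λ|u|^{p-2}u` in `Ω`. -/
def IsViscSolPLap {n : ℕ} (p lam : ℝ) (Ω : Set (EuclideanSpace ℝ (Fin n)))
    (u : EuclideanSpace ℝ (Fin n) → ℝ) : Prop :=
  IsViscSupersolPLap p lam Ω u ∧ IsViscSubsolPLap p lam Ω u

/-- Viscosity supersolution of `-min{|∇u| - βu, Δ∞u} = 0` in `Ω`. -/
def IsViscSupersolEig {n : ℕ} (β : ℝ) (Ω : Set (EuclideanSpace ℝ (Fin n)))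
    (u : EuclideanSpace ℝ (Fin n) → ℝ) : Prop :=
  ∀ x₀ ∈ Ω, ∀ φ : EuclideanSpace ℝ (Fin n) → ℝ, ContDiffAt ℝ 2 φ x₀ → φ x₀ = u x₀ →
    IsLocalMinOn (fun x => u x - φ x) Ω x₀ →
    min (‖gradient φ x₀‖ - β * φ x₀) (infLap φ x₀) ≤ 0

/-- Viscosity subsolution of `-min{|∇u| - βu, Δ∞u} = 0` in `Ω`. -/
def IsViscSubsolEig {n : ℕ} (β : ℝ) (Ω : Set (EuclideanSpace ℝ (Fin n)))
    (u : EuclideanSpace ℝ (Fin n) → ℝ) : Prop :=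
  ∀ x₀ ∈ Ω, ∀ φ : EuclideanSpace ℝ (Fin n) → ℝ, ContDiffAt ℝ 2 φ x₀ → φ x₀ = u x₀ →
    IsLocalMaxOn (fun x => u x - φ x) Ω x₀ →
    0 ≤ min (‖gradient φ x₀‖ - β * φ x₀) (infLap φ x₀)

/-- Viscosity solution of `-min{|∇u| - βu, Δ∞u} = 0` in `Ω`. -/
def IsViscSolEig {n : ℕ} (β : ℝ) (Ω : Set (EuclideanSpace ℝ (Fin n)))
    (u : EuclideanSpace ℝ (Fin n) → ℝ) : Prop :=
  IsViscSupersolEig β Ω u ∧ IsViscSubsolEig β Ω u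

open InnerProductSpace

section Gradient

variable {F : Type*} [NormedAddCommGroup F] [InnerProductSpace ℝ F]

theorem contDiff_norm_sub_pow_four {k : WithTop ℕ∞} (x₀ : F) :
    ContDiff ℝ k fun y : F => ‖y - x₀‖ ^ 4 := by
  simpa only [Function.comp_def, id, ← pow_mul] using
    ((contDiff_norm_sq ℝ (n := k)).comp (contDiff_id.sub (contDiff_const (c := x₀)))).pow 2

variable [CompleteSpace F]

theorem gradient_fun_neg (f : F → ℝ) : gradient (fun y => -f y) = -gradient f := by
  ext1 x
  simp only [gradient, fderiv_fun_neg, map_neg, Pi.neg_apply]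

theorem gradient_fun_sub {f g : F → ℝ} {x : F} (hf : DifferentiableAt ℝ f x)
    (hg : DifferentiableAt ℝ g x) :
    gradient (fun y => f y - g y) x = gradient f x - gradient g x := by
  simp only [gradient, fderiv_fun_sub hf hg, map_sub]

theorem gradient_add_const (f : F → ℝ) (c : ℝ) : gradient (fun y => f y + c) = gradient f := by
  ext1 x
  simp only [gradient, fderiv_add_const]

theorem ContDiffAt.contDiffAt_gradient {f : F → ℝ} {x : F} {m k : WithTop ℕ∞}
    (hf : ContDiffAt ℝ k f x) (hmk : m + 1 ≤ k) : ContDiffAt ℝ m (gradient f) x :=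
  (toDual ℝ F).symm.contDiff.contDiffAt.comp x (hf.fderiv_right hmk)

theorem hasGradientAt_norm_sub_pow_four (x₀ x : F) :
    HasGradientAt (fun y => ‖y - x₀‖ ^ 4) ((4 * ‖x - x₀‖ ^ 2) • (x - x₀)) x := by
  have h := ((hasFDerivAt_id x).sub_const x₀).norm_sq.pow 2
  simp only [← pow_mul] at h
  rw [hasGradientAt_iff_hasFDerivAt]
  refine h.congr_fderiv ?_
  ext w
  simp only [id_eq, Nat.add_one_sub_one, mul_one, nsmul_eq_mul, Nat.cast_ofNat, map_sub,
    ContinuousLinearMap.comp_id, smul_apply, sub_apply, coe_innerSL_apply, smul_eq_mul, map_smul,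
    toDual_apply_apply]
  ring

theorem hasFDerivAt_gradient_norm_sub_pow_four_self (x₀ : F) :
    HasFDerivAt (gradient fun y => ‖y - x₀‖ ^ 4) (0 : F →L[ℝ] F) x₀ := by
  rw [gradient_eq (hasGradientAt_norm_sub_pow_four x₀)]
  have hv : HasFDerivAt (fun x : F => x - x₀) (ContinuousLinearMap.id ℝ F) x₀ :=
    (hasFDerivAt_id x₀).sub_const x₀
  refine ((hv.norm_sq.const_mul 4).smul hv).congr_fderiv ?_
  ext w
  simp

theorem gradient_sub_norm_sub_pow_four_self {φ : F → ℝ} {x₀ : F} (hφ : DifferentiableAt ℝ φ x₀) :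
    gradient (fun y => φ y - ‖y - x₀‖ ^ 4) x₀ = gradient φ x₀ := by
  rw [gradient_fun_sub hφ (hasGradientAt_norm_sub_pow_four x₀ x₀).differentiableAt,
    (hasGradientAt_norm_sub_pow_four x₀ x₀).gradient]
  simp

theorem fderiv_gradient_sub_norm_sub_pow_four_self {φ : F → ℝ} {x₀ : F}
    (hφ : ContDiffAt ℝ 2 φ x₀) :
    fderiv ℝ (gradient fun y => φ y - ‖y - x₀‖ ^ 4) x₀ = fderiv ℝ (gradient φ) x₀ := by
  have hsub : gradient (fun y => φ y - ‖y - x₀‖ ^ 4) =ᶠ[𝓝 x₀]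
      fun y => gradient φ y - gradient (fun y => ‖y - x₀‖ ^ 4) y := by
    filter_upwards [hφ.eventually (by simp)] with y hy
    exact gradient_fun_sub (hy.differentiableAt (by simp))
      (hasGradientAt_norm_sub_pow_four x₀ y).differentiableAt
  have hq := hasFDerivAt_gradient_norm_sub_pow_four_self x₀
  rw [hsub.fderiv_eq, fderiv_fun_sub ((hφ.contDiffAt_gradient (m := 1) le_rfl).differentiableAt
    one_ne_zero) hq.differentiableAt, hq.fderiv, sub_zero]

end Gradient

variable {n : ℕ}

local notation "E" => EuclideanSpace ℝ (Fin n)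

theorem infLap_fun_neg (f : E → ℝ) : infLap (fun y => -f y) = -infLap f := by
  ext1 x
  simp only [infLap, gradient_fun_neg, fderiv_neg, Pi.neg_apply, map_neg, neg_apply,
    inner_neg_right, neg_neg]

theorem lapl_fun_neg (f : E → ℝ) : lapl (fun y => -f y) = -lapl f := by
  ext1 x
  simp only [lapl, gradient_fun_neg, fderiv_neg, Pi.neg_apply, neg_apply,
    inner_neg_left, Finset.sum_neg_distrib]

theorem pLapOp_add_const (p : ℝ) (f : E → ℝ) (c : ℝ) :
    pLapOp p (fun y => f y + c) = pLapOp p f := by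
  ext1 x
  unfold pLapOp infLap lapl
  rw [gradient_add_const]

theorem infLap_sub_norm_sub_pow_four_self {φ : E → ℝ} {x₀ : E} (hφ : ContDiffAt ℝ 2 φ x₀) :
    infLap (fun y => φ y - ‖y - x₀‖ ^ 4) x₀ = infLap φ x₀ := by
  simp only [infLap, fderiv_gradient_sub_norm_sub_pow_four_self hφ,
    gradient_sub_norm_sub_pow_four_self (hφ.differentiableAt two_ne_zero)]

theorem lapl_sub_norm_sub_pow_four_self {φ : E → ℝ} {x₀ : E} (hφ : ContDiffAt ℝ 2 φ x₀) :
    lapl (fun y => φ y - ‖y - x₀‖ ^ 4) x₀ = lapl φ x₀ := by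
  simp only [lapl, fderiv_gradient_sub_norm_sub_pow_four_self hφ]

section Continuity

variable {f : EuclideanSpace ℝ (Fin n) → ℝ} {x : EuclideanSpace ℝ (Fin n)}

theorem ContDiffAt.continuousAt_fderiv_gradient (hf : ContDiffAt ℝ 2 f x) :
    ContinuousAt (fderiv ℝ (gradient f)) x :=
  ((hf.contDiffAt_gradient (m := 1) le_rfl).fderiv_right (m := 0) (by norm_num)).continuousAt

theorem ContDiffAt.continuousAt_infLap (hf : ContDiffAt ℝ 2 f x) : ContinuousAt (infLap f) x :=
  have hg := (hf.contDiffAt_gradient (m := 1) le_rfl).continuousAt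
  (hf.continuousAt_fderiv_gradient.clm_apply hg).inner hg

theorem ContDiffAt.continuousAt_lapl (hf : ContDiffAt ℝ 2 f x) : ContinuousAt (lapl f) x :=
  tendsto_finsetSum _ fun _ _ =>
    (hf.continuousAt_fderiv_gradient.clm_apply continuousAt_const).inner continuousAt_const

end Continuity

section Touching

variable {F : Type*} [NormedAddCommGroup F]

theorem tendsto_of_isMinOn_sub_of_tendstoUniformlyOn {K : Set F} {f : ℕ → F → ℝ} {g ψ : F → ℝ}
    {x₀ : F} {x : ℕ → F} (hfg : TendstoUniformlyOn f g atTop K) (hx₀ : x₀ ∈ K)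
    (hgap : ∀ y ∈ K, g x₀ - ψ x₀ + ‖y - x₀‖ ^ 4 ≤ g y - ψ y) (hxK : ∀ j, x j ∈ K)
    (hxmin : ∀ j, IsMinOn (fun y => f j y - ψ y) K (x j)) :
    Tendsto x atTop (𝓝 x₀) := by
  refine Metric.tendsto_nhds.mpr fun ε hε => ?_
  filter_upwards [Metric.tendstoUniformlyOn_iff.mp hfg (ε ^ 4 / 2) (by positivity)] with j hj
  obtain ⟨hx₀j, -⟩ := abs_lt.mp (hj x₀ hx₀)
  obtain ⟨-, hxj⟩ := abs_lt.mp (hj (x j) (hxK j))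
  have hmin : f j (x j) - ψ (x j) ≤ f j x₀ - ψ x₀ := hxmin j hx₀
  have hgap_j : ‖x j - x₀‖ ^ 4 < ε ^ 4 := by linarith [hgap (x j) (hxK j)]
  rw [dist_eq_norm]
  exact lt_of_pow_lt_pow_left₀ 4 hε.le hgap_j

variable [ProperSpace F]

theorem exists_seq_isLocalMinOn_sub_norm_sub_pow_four {Ω : Set F} (hΩ : IsOpen Ω)
    {uj : ℕ → F → ℝ} {u φ : F → ℝ} (hujc : ∀ j, ContinuousOn (uj j) Ω) (hu : ContinuousOn u Ω)
    (hconv : TendstoLocallyUniformlyOn uj u atTop Ω) {x₀ : F} (hx₀ : x₀ ∈ Ω)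
    (hφ : ∀ᶠ y in 𝓝 x₀, ContinuousAt φ y) (hmin : IsLocalMinOn (fun y => u y - φ y) Ω x₀) :
    ∃ x : ℕ → F, Tendsto x atTop (𝓝 x₀) ∧ (∀ j, x j ∈ Ω) ∧
      (∀ᶠ j in atTop, IsLocalMinOn (fun y => uj j y - (φ y - ‖y - x₀‖ ^ 4)) Ω (x j)) ∧
      Tendsto (fun j => uj j (x j)) atTop (𝓝 (u x₀)) := by
  set ψ : F → ℝ := fun y => φ y - ‖y - x₀‖ ^ 4
  have hev : ∀ᶠ y in 𝓝 x₀, y ∈ Ω ∧ ContinuousAt φ y ∧ u x₀ - φ x₀ ≤ u y - φ y :=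
    (hΩ.eventually_mem hx₀).and (hφ.and (hΩ.nhdsWithin_eq hx₀ ▸ hmin))
  obtain ⟨r, hr, hball⟩ := Metric.nhds_basis_closedBall.eventually_iff.mp hev
  have hKΩ : Metric.closedBall x₀ r ⊆ Ω := fun y hy => (hball hy).1
  have hx₀K : x₀ ∈ Metric.closedBall x₀ r := Metric.mem_closedBall_self hr.le
  have hunif : TendstoUniformlyOn uj u atTop (Metric.closedBall x₀ r) :=
    (tendstoLocallyUniformlyOn_iff_tendstoUniformlyOn_of_compact (isCompact_closedBall x₀ r)).mp
      (hconv.mono hKΩ)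
  have hminimizer : ∀ j, ∃ z ∈ Metric.closedBall x₀ r,
      IsMinOn (fun y => uj j y - ψ y) (Metric.closedBall x₀ r) z := fun j =>
    (isCompact_closedBall x₀ r).exists_isMinOn ⟨x₀, hx₀K⟩ <| ((hujc j).mono hKΩ).sub <|
      fun y hy => ((hball hy).2.1.sub (continuous_norm.comp (continuous_sub_right x₀)
        |>.pow 4).continuousAt).continuousWithinAt
  choose x hxK hxmin using hminimizer
  have htend : Tendsto x atTop (𝓝 x₀) :=
    tendsto_of_isMinOn_sub_of_tendstoUniformlyOn hunif hx₀K
      (fun y hy => by simp only [ψ, sub_self, norm_zero]; linarith [(hball hy).2.2]) hxK hxmin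
  refine ⟨x, htend, fun j => hKΩ (hxK j), ?_, ?_⟩
  · filter_upwards [htend.eventually (Metric.ball_mem_nhds x₀ hr)] with j hj
    exact ((hxmin j).isLocalMin <| Metric.closedBall_mem_nhds_of_mem hj).on Ω
  · exact hconv.tendsto_comp (hu.continuousWithinAt hx₀) hx₀
      (tendsto_nhdsWithin_iff.mpr ⟨htend, .of_forall fun j => hKΩ (hxK j)⟩)

end Touching

section TouchingSequences

variable {Ω : Set (EuclideanSpace ℝ (Fin n))} {uj : ℕ → EuclideanSpace ℝ (Fin n) → ℝ}
  {u φ : EuclideanSpace ℝ (Fin n) → ℝ} {x₀ : EuclideanSpace ℝ (Fin n)}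

theorem exists_touching_seq_of_isLocalMinOn (hΩ : IsOpen Ω) (hujc : ∀ j, ContinuousOn (uj j) Ω)
    (hu : ContinuousOn u Ω) (hconv : TendstoLocallyUniformlyOn uj u atTop Ω) (hx₀ : x₀ ∈ Ω)
    (hφ : ContDiffAt ℝ 2 φ x₀) (hmin : IsLocalMinOn (fun y => u y - φ y) Ω x₀) :
    ∃ (ψ : E → ℝ) (x : ℕ → E), (∀ j, x j ∈ Ω) ∧
      (∀ᶠ j in atTop, ContDiffAt ℝ 2 ψ (x j) ∧ IsLocalMinOn (fun y => uj j y - ψ y) Ω (x j)) ∧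
      Tendsto (fun j => uj j (x j)) atTop (𝓝 (u x₀)) ∧
      Tendsto (fun j => ‖gradient ψ (x j)‖) atTop (𝓝 ‖gradient φ x₀‖) ∧
      Tendsto (fun j => lapl ψ (x j)) atTop (𝓝 (lapl φ x₀)) ∧
      Tendsto (fun j => infLap ψ (x j)) atTop (𝓝 (infLap φ x₀)) := by
  obtain ⟨x, htend, hxΩ, hxmin, hval⟩ := exists_seq_isLocalMinOn_sub_norm_sub_pow_four hΩ hujc hu
    hconv hx₀ ((hφ.eventually (by simp)).mono fun y hy => hy.continuousAt) hmin
  have hψ : ContDiffAt ℝ 2 (fun y => φ y - ‖y - x₀‖ ^ 4) x₀ :=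
    hφ.sub (contDiff_norm_sub_pow_four x₀).contDiffAt
  refine ⟨_, x, hxΩ, (htend.eventually (hψ.eventually (by simp))).and hxmin, hval, ?_, ?_, ?_⟩
  · rw [← gradient_sub_norm_sub_pow_four_self (hφ.differentiableAt two_ne_zero)]
    exact ((hψ.contDiffAt_gradient (m := 1) le_rfl).continuousAt.tendsto.comp htend).norm
  · rw [← lapl_sub_norm_sub_pow_four_self hφ]
    exact hψ.continuousAt_lapl.tendsto.comp htend
  · rw [← infLap_sub_norm_sub_pow_four_self hφ]
    exact hψ.continuousAt_infLap.tendsto.comp htend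

theorem exists_touching_seq_of_isLocalMaxOn (hΩ : IsOpen Ω) (hujc : ∀ j, ContinuousOn (uj j) Ω)
    (hu : ContinuousOn u Ω) (hconv : TendstoLocallyUniformlyOn uj u atTop Ω) (hx₀ : x₀ ∈ Ω)
    (hφ : ContDiffAt ℝ 2 φ x₀) (hmax : IsLocalMaxOn (fun y => u y - φ y) Ω x₀) :
    ∃ (ψ : E → ℝ) (x : ℕ → E), (∀ j, x j ∈ Ω) ∧
      (∀ᶠ j in atTop, ContDiffAt ℝ 2 ψ (x j) ∧ IsLocalMaxOn (fun y => uj j y - ψ y) Ω (x j)) ∧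
      Tendsto (fun j => uj j (x j)) atTop (𝓝 (u x₀)) ∧
      Tendsto (fun j => ‖gradient ψ (x j)‖) atTop (𝓝 ‖gradient φ x₀‖) ∧
      Tendsto (fun j => lapl ψ (x j)) atTop (𝓝 (lapl φ x₀)) ∧
      Tendsto (fun j => infLap ψ (x j)) atTop (𝓝 (infLap φ x₀)) := by
  obtain ⟨ψ, x, hxΩ, hev, hval, hgrad, hlapl, hinfLap⟩ :=
    exists_touching_seq_of_isLocalMinOn hΩ (fun j => (hujc j).neg) hu.neg hconv.fun_neg hx₀
      hφ.neg (by simpa only [Pi.neg_apply, neg_sub_neg, neg_sub] using hmax.neg)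
  refine ⟨fun y => -ψ y, x, hxΩ, ?_, by simpa using hval.neg, ?_, ?_, ?_⟩
  · filter_upwards [hev] with j ⟨hψ, hmin⟩
    exact ⟨hψ.neg, by simpa only [Pi.neg_apply, neg_sub, sub_neg_eq_add, add_comm] using hmin.neg⟩
  · simpa only [gradient_fun_neg, Pi.neg_apply, norm_neg] using hgrad
  · simpa only [lapl_fun_neg, Pi.neg_apply, neg_neg] using hlapl.neg
  · simpa only [infLap_fun_neg, Pi.neg_apply, neg_neg] using hinfLap.neg

end TouchingSequences

theorem IsViscSupersolPLap.nonneg_of_isLocalMinOn {p lam : ℝ} {Ω : Set E}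
    {u ψ : E → ℝ} {x : E} (h : IsViscSupersolPLap p lam Ω u) (hx : x ∈ Ω)
    (hψ : ContDiffAt ℝ 2 ψ x) (hmin : IsLocalMinOn (fun y => u y - ψ y) Ω x) :
    0 ≤ pLapOp p ψ x - lam * |u x| ^ (p - 2) * u x := by
  have := h x hx (fun y => ψ y + (u x - ψ x)) (hψ.add contDiffAt_const) (by ring)
    (hmin.mono fun y hy => by dsimp only at hy ⊢; linarith)
  rwa [pLapOp_add_const, add_sub_cancel] at this

theorem IsViscSubsolPLap.nonpos_of_isLocalMaxOn {p lam : ℝ} {Ω : Set E}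
    {u ψ : E → ℝ} {x : E} (h : IsViscSubsolPLap p lam Ω u) (hx : x ∈ Ω)
    (hψ : ContDiffAt ℝ 2 ψ x) (hmax : IsLocalMaxOn (fun y => u y - ψ y) Ω x) :
    pLapOp p ψ x - lam * |u x| ^ (p - 2) * u x ≤ 0 := by
  have := h x hx (fun y => ψ y + (u x - ψ x)) (hψ.add contDiffAt_const) (by ring)
    (hmax.mono fun y hy => by dsimp only at hy ⊢; linarith)
  rwa [pLapOp_add_const, add_sub_cancel] at this

/-- The viscosity expression of `-Δ_p u - λ u^{p-1}` at a contact point, with `g = |∇φ|`,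
`L = Δφ`, `I = Δ∞φ` and `v = u > 0`. -/
noncomputable def pLapResidual (p lam g L I v : ℝ) : ℝ :=
  -(g ^ (p - 2) * L) - (p - 2) * g ^ (p - 4) * I - lam * v ^ (p - 2) * v

theorem pLapOp_sub_eq_pLapResidual {p lam v : ℝ} (hp : 4 < p) (hv : 0 ≤ v) (φ : E → ℝ) (x : E) :
    pLapOp p φ x - lam * |v| ^ (p - 2) * v =
      pLapResidual p lam ‖gradient φ x‖ (lapl φ x) (infLap φ x) v := by
  rw [pLapResidual, abs_of_nonneg hv, pLapOp]
  -- for `p > 4` the convention at `∇φ = 0` agrees with the formula: `0 ^ (p - 2) = 0 ^ (p - 4) = 0`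
  split_ifs with h
  · rw [h, norm_zero, Real.zero_rpow (by linarith), Real.zero_rpow (by linarith)]
    ring
  · rfl

section PLapResidual

variable {p lam g L I v : ℝ}

theorem pLapResidual_eq (hg : 0 ≤ g) (hp : p ≠ 2) :
    pLapResidual p lam g L I v =
      -lam * v ^ (p - 2) * v - g ^ (p - 4) * (g ^ 2 * L + (p - 2) * I) := by
  have hsplit : g ^ (p - 2) = g ^ (p - 4) * g ^ 2 := by
    rw [← Real.rpow_add_natCast' hg (by push_cast; intro h; apply hp; linarith)]
    ring_nf
  rw [pLapResidual, hsplit]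
  ring

theorem neg_mul_rpow_sub_two_mul_mul (hlam : lam ≤ 0) (hv : 0 ≤ v) (hp : p ≠ 0) :
    -lam * v ^ (p - 2) * v * v = ((-lam) ^ (1 / p) * v) ^ p := by
  rw [Real.mul_rpow (Real.rpow_nonneg (neg_nonneg.mpr hlam) _) hv, ← Real.rpow_mul
    (neg_nonneg.mpr hlam), one_div_mul_cancel hp, Real.rpow_one, mul_assoc, mul_assoc,
    ← pow_two, ← Real.rpow_add_natCast' hv (by simpa using hp)]
  norm_num

theorem sub_two_mul_le_of_pLapResidual_nonneg (hp : 4 < p) (hlam : lam ≤ 0) (hv : 0 < v)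
    (hg : 0 < g) (hvg : (-lam) ^ (1 / p) * v ≤ g) (hres : 0 ≤ pLapResidual p lam g L I v) :
    (p - 2) * I ≤ g ^ 4 / v - g ^ 2 * L := by
  rw [pLapResidual_eq hg.le (by linarith)] at hres
  have hA : 0 < g ^ (p - 4) := Real.rpow_pos_of_pos hg _
  have hgp : g ^ p = g ^ (p - 4) * g ^ 4 := by
    rw [← Real.rpow_add_natCast' hg.le (by push_cast; linarith)]
    ring_nf
  have hpow : g ^ (p - 4) * ((g ^ 2 * L + (p - 2) * I) * v) ≤ g ^ (p - 4) * g ^ 4 := by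
    calc g ^ (p - 4) * ((g ^ 2 * L + (p - 2) * I) * v)
        ≤ -lam * v ^ (p - 2) * v * v := by nlinarith
      _ = ((-lam) ^ (1 / p) * v) ^ p := neg_mul_rpow_sub_two_mul_mul hlam hv.le (by linarith)
      _ ≤ g ^ p := Real.rpow_le_rpow
        (mul_nonneg (Real.rpow_nonneg (neg_nonneg.mpr hlam) _) hv.le) hvg (by linarith)
      _ = g ^ (p - 4) * g ^ 4 := hgp
  have := le_of_mul_le_mul_left hpow hA
  rw [le_sub_iff_add_le, le_div_iff₀ hv]
  linarith

theorem pow_four_le_of_pLapResidual_nonpos {c c' : ℝ} (hp : 4 < p) (hlam : lam ≤ 0) (hv : 0 ≤ v)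
    (hg : 0 ≤ g) (hgc : g ≤ c) (hc' : 0 < c') (hcv : c' ≤ (-lam) ^ (1 / p) * v)
    (hres : pLapResidual p lam g L I v ≤ 0) :
    c' ^ 4 ≤ (c / c') ^ (p - 4) * (c ^ 2 * |L| + (p - 2) * |I|) * v := by
  rw [pLapResidual_eq hg (by linarith)] at hres
  have hQ : g ^ 2 * L + (p - 2) * I ≤ c ^ 2 * |L| + (p - 2) * |I| := by
    have hL : g ^ 2 * L ≤ c ^ 2 * |L| :=
      (mul_le_mul_of_nonneg_left (le_abs_self L) (by positivity)).trans (by gcongr)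
    have hI : (p - 2) * I ≤ (p - 2) * |I| :=
      mul_le_mul_of_nonneg_left (le_abs_self I) (by linarith)
    linarith
  have hc'p : c' ^ p = c' ^ (p - 4) * c' ^ 4 := by
    rw [← Real.rpow_add_natCast' hc'.le (by push_cast; linarith)]
    ring_nf
  have hmain : c' ^ (p - 4) * c' ^ 4 ≤ c ^ (p - 4) * (c ^ 2 * |L| + (p - 2) * |I|) * v := by
    calc c' ^ (p - 4) * c' ^ 4 = c' ^ p := hc'p.symm
      _ ≤ ((-lam) ^ (1 / p) * v) ^ p := Real.rpow_le_rpow hc'.le hcv (by linarith)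
      _ = -lam * v ^ (p - 2) * v * v := (neg_mul_rpow_sub_two_mul_mul hlam hv (by linarith)).symm
      _ ≤ g ^ (p - 4) * (g ^ 2 * L + (p - 2) * I) * v :=
        mul_le_mul_of_nonneg_right (by linarith) hv
      _ ≤ g ^ (p - 4) * (c ^ 2 * |L| + (p - 2) * |I|) * v := by gcongr
      _ ≤ c ^ (p - 4) * (c ^ 2 * |L| + (p - 2) * |I|) * v := by
        have : 0 ≤ p - 2 := by linarith
        gcongr
  rw [Real.div_rpow (hg.trans hgc) hc'.le, div_mul_eq_mul_div, div_mul_eq_mul_div,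
    le_div_iff₀ (Real.rpow_pos_of_pos hc' _)]
  linarith [mul_comm (c' ^ 4) (c' ^ (p - 4))]

theorem neg_sub_two_mul_lt_of_pLapResidual_nonpos (hp : 4 < p) (hlam : lam < 0) (hv : 0 < v)
    (hg : 0 ≤ g) (hres : pLapResidual p lam g L I v ≤ 0) :
    (p - 2) * -I < g ^ 2 * L := by
  rw [pLapResidual_eq hg (by linarith)] at hres
  have hpos : 0 < -lam * v ^ (p - 2) * v := by
    have := Real.rpow_pos_of_pos hv (p - 2)
    have : 0 < -lam := by linarith
    positivity
  have : 0 < g ^ (p - 4) * (g ^ 2 * L + (p - 2) * I) := by linarith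
  have := pos_of_mul_pos_right this (Real.rpow_nonneg hg _)
  linarith

end PLapResidual

theorem tendsto_mul_rpow_atTop_nhds_zero_of_lt_one {r : ℝ} (h0 : 0 < r) (h1 : r < 1) :
    Tendsto (fun x : ℝ => x * r ^ x) atTop (𝓝 0) := by
  refine (tendsto_rpow_mul_exp_neg_mul_atTop_nhds_zero 1 (-Real.log r)
    (neg_pos.mpr (Real.log_neg h0 h1))).congr fun x => ?_
  rw [Real.rpow_one, Real.rpow_def_of_pos h0, neg_neg, mul_comm x]

section Limits

variable {p lam v g L I : ℕ → ℝ} {β V G L₀ I₀ : ℝ}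

theorem nonpos_of_tendsto_of_pLapResidual_nonneg (hp : ∀ j, 4 < p j)
    (hptop : Tendsto p atTop atTop) (hlam : ∀ j, lam j < 0)
    (hlim : Tendsto (fun j => (-lam j) ^ (1 / p j)) atTop (𝓝 β)) (hv : ∀ j, 0 < v j)
    (hvV : Tendsto v atTop (𝓝 V)) (hV : V ≠ 0) (hgG : Tendsto g atTop (𝓝 G))
    (hL : Tendsto L atTop (𝓝 L₀)) (hI : Tendsto I atTop (𝓝 I₀)) (hβG : β * V < G)
    (hres : ∀ᶠ j in atTop, 0 ≤ pLapResidual (p j) (lam j) (g j) (L j) (I j) (v j)) :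
    I₀ ≤ 0 := by
  have hvg : ∀ᶠ j in atTop, (-lam j) ^ (1 / p j) * v j < g j :=
    ((hlim.mul hvV).prodMk_nhds hgG).eventually (isOpen_lt_prod.mem_nhds hβG)
  have hbound : ∀ᶠ j in atTop, I j ≤ (g j ^ 4 / v j - g j ^ 2 * L j) * (p j - 2)⁻¹ := by
    filter_upwards [hres, hvg] with j hres hvg
    have hpos : 0 < (-lam j) ^ (1 / p j) * v j :=
      mul_pos (Real.rpow_pos_of_pos (neg_pos.mpr (hlam j)) _) (hv j)
    rw [← div_eq_mul_inv, le_div_iff₀ (by linarith [hp j]), mul_comm]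
    exact sub_two_mul_le_of_pLapResidual_nonneg (hp j) (hlam j).le (hv j) (hpos.trans hvg)
      hvg.le hres
  have hzero : Tendsto (fun j => (g j ^ 4 / v j - g j ^ 2 * L j) * (p j - 2)⁻¹) atTop
      (𝓝 ((G ^ 4 / V - G ^ 2 * L₀) * 0)) :=
    (((hgG.pow 4).div hvV hV).sub ((hgG.pow 2).mul hL)).mul
      (tendsto_atTop_add_const_right _ (-2) hptop).inv_tendsto_atTop
  rw [mul_zero] at hzero
  exact le_of_tendsto_of_tendsto hI hzero hbound

theorem le_of_tendsto_of_pLapResidual_nonpos (hp : ∀ j, 4 < p j)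
    (hptop : Tendsto p atTop atTop) (hlam : ∀ j, lam j ≤ 0)
    (hlim : Tendsto (fun j => (-lam j) ^ (1 / p j)) atTop (𝓝 β)) (hv : ∀ j, 0 ≤ v j)
    (hvV : Tendsto v atTop (𝓝 V)) (hg : ∀ j, 0 ≤ g j) (hgG : Tendsto g atTop (𝓝 G))
    (hL : Tendsto L atTop (𝓝 L₀)) (hI : Tendsto I atTop (𝓝 I₀))
    (hres : ∀ᶠ j in atTop, pLapResidual (p j) (lam j) (g j) (L j) (I j) (v j) ≤ 0) :
    β * V ≤ G := by
  by_contra! hGβ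
  have hG : 0 ≤ G := ge_of_tendsto' hgG hg
  obtain ⟨c', hGc', hc'βV⟩ := exists_between hGβ
  obtain ⟨c, hGc, hcc'⟩ := exists_between hGc'
  have hc : 0 < c := hG.trans_lt hGc
  have hc' : 0 < c' := hc.trans hcc'
  have hr₀ : 0 < c / c' := div_pos hc hc'
  have hr₁ : c / c' < 1 := (div_lt_one hc').mpr hcc'
  have hbound : ∀ᶠ j in atTop,
      c' ^ 4 ≤ (c / c') ^ (p j - 4) * (c ^ 2 * |L j| + (p j - 2) * |I j|) * v j := by
    filter_upwards [hres, hgG.eventually (eventually_le_nhds hGc),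
      (hlim.mul hvV).eventually (eventually_ge_nhds hc'βV)] with j hres hgc hcv
    exact pow_four_le_of_pLapResidual_nonpos (hp j) (hlam j) (hv j) (hg j) hgc hc' hcv hres
  have hp4 : Tendsto (fun j => p j - 4) atTop atTop := tendsto_atTop_add_const_right _ (-4) hptop
  have hpow : Tendsto (fun j => (c / c') ^ (p j - 4)) atTop (𝓝 0) :=
    (tendsto_rpow_atTop_of_base_lt_one _ (by linarith) hr₁).comp hp4
  have hmul : Tendsto (fun j => (p j - 2) * (c / c') ^ (p j - 4)) atTop (𝓝 0) := by
    have := ((tendsto_mul_rpow_atTop_nhds_zero_of_lt_one hr₀ hr₁).comp hp4).add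
      (hpow.const_mul 2)
    rw [mul_zero, add_zero] at this
    exact this.congr fun j => by simp only [Function.comp_apply]; ring
  have hzero : Tendsto
      (fun j => (c / c') ^ (p j - 4) * (c ^ 2 * |L j| + (p j - 2) * |I j|) * v j) atTop
      (𝓝 ((0 * (c ^ 2 * |L₀|) + 0 * |I₀|) * V)) := by
    refine (((hpow.mul (hL.abs.const_mul _)).add (hmul.mul hI.abs)).mul hvV).congr fun j => ?_
    ring
  simp only [zero_mul, add_zero] at hzero
  have : c' ^ 4 ≤ 0 := ge_of_tendsto hzero hbound
  linarith [pow_pos hc' 4]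

theorem nonneg_of_tendsto_of_pLapResidual_nonpos (hp : ∀ j, 4 < p j)
    (hptop : Tendsto p atTop atTop) (hlam : ∀ j, lam j < 0) (hv : ∀ j, 0 < v j)
    (hg : ∀ j, 0 ≤ g j) (hgG : Tendsto g atTop (𝓝 G)) (hL : Tendsto L atTop (𝓝 L₀))
    (hI : Tendsto I atTop (𝓝 I₀))
    (hres : ∀ᶠ j in atTop, pLapResidual (p j) (lam j) (g j) (L j) (I j) (v j) ≤ 0) :
    0 ≤ I₀ := by
  by_contra! hI₀
  have hlarge : Tendsto (fun j => (p j - 2) * -I j) atTop atTop :=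
    (tendsto_atTop_add_const_right _ (-2) hptop).atTop_mul_pos (neg_pos.mpr hI₀) hI.neg
  obtain ⟨j, hres, hbig, hsmall⟩ := (hres.and ((hlarge.eventually_gt_atTop (G ^ 2 * L₀ + 1)).and
    (((hgG.pow 2).mul hL).eventually (eventually_lt_nhds (lt_add_one _))))).exists
  linarith [neg_sub_two_mul_lt_of_pLapResidual_nonpos (hp j) (hlam j) (hv j) (hg j) hres]

end Limits

theorem limit_is_viscosity_solution_infinity_eigenvalue_general {n : ℕ}
    (Ω : Set (EuclideanSpace ℝ (Fin n))) (hΩ : IsOpen Ω) (β : ℝ)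
    (p lam : ℕ → ℝ) (hp : ∀ j, 4 < p j) (hptop : Tendsto p atTop atTop)
    (hlam : ∀ j, lam j < 0)
    (hlim : Tendsto (fun j => (-lam j) ^ (1 / p j)) atTop (𝓝 β))
    (uj : ℕ → EuclideanSpace ℝ (Fin n) → ℝ)
    (hujc : ∀ j, ContinuousOn (uj j) Ω) (hujpos : ∀ j, ∀ x ∈ Ω, 0 < uj j x)
    (hsol : ∀ j, IsViscSolPLap (p j) (lam j) Ω (uj j))
    (u : EuclideanSpace ℝ (Fin n) → ℝ) (hu : ContinuousOn u Ω) (hupos : ∀ x ∈ Ω, 0 < u x)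
    (hconv : TendstoLocallyUniformlyOn uj u atTop Ω) :
    IsViscSolEig β Ω u := by
  refine ⟨fun x₀ hx₀ φ hφ hφx₀ hmin => ?_, fun x₀ hx₀ φ hφ hφx₀ hmax => ?_⟩
  · obtain ⟨ψ, x, hxΩ, hev, hval, hgrad, hlapl, hinfLap⟩ :=
      exists_touching_seq_of_isLocalMinOn hΩ hujc hu hconv hx₀ hφ hmin
    have hres := hev.mono fun j ⟨hψ, hmin⟩ =>
      ((hsol j).1.nonneg_of_isLocalMinOn (hxΩ j) hψ hmin).trans_eq
        (pLapOp_sub_eq_pLapResidual (hp j) (hujpos j _ (hxΩ j)).le ψ (x j))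
    rw [min_le_iff, hφx₀, sub_nonpos]
    refine (le_or_gt _ _).imp id fun hβG => ?_
    exact nonpos_of_tendsto_of_pLapResidual_nonneg hp hptop hlam hlim
      (fun j => hujpos j _ (hxΩ j)) hval (hupos x₀ hx₀).ne' hgrad hlapl hinfLap hβG hres
  · obtain ⟨ψ, x, hxΩ, hev, hval, hgrad, hlapl, hinfLap⟩ :=
      exists_touching_seq_of_isLocalMaxOn hΩ hujc hu hconv hx₀ hφ hmax
    have hres := hev.mono fun j ⟨hψ, hmax⟩ =>
      (pLapOp_sub_eq_pLapResidual (hp j) (hujpos j _ (hxΩ j)).le ψ (x j)).symm.trans_le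
        ((hsol j).2.nonpos_of_isLocalMaxOn (hxΩ j) hψ hmax)
    rw [hφx₀]
    refine le_min (sub_nonneg.mpr ?_) ?_
    · exact le_of_tendsto_of_pLapResidual_nonpos hp hptop (fun j => (hlam j).le) hlim
        (fun j => (hujpos j _ (hxΩ j)).le) hval (fun _ => norm_nonneg _) hgrad hlapl hinfLap hres
    · exact nonneg_of_tendsto_of_pLapResidual_nonpos hp hptop hlam (fun j => hujpos j _ (hxΩ j))
        (fun _ => norm_nonneg _) hgrad hlapl hinfLap hres

/-- a locally uniform limit of positive viscosity solutions of the `p_j`-Laplacian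
eigenvalue equations, with `(-λ_j)^{1/p_j} → β`, is a viscosity solution of
`-min{|∇u| - βu, Δ∞u} = 0` in `Ω`. -/
theorem limit_is_viscosity_solution_infinity_eigenvalue {n : ℕ}
    (Ω : Set (EuclideanSpace ℝ (Fin n))) (hΩ : IsOpen Ω) (β : ℝ) (hβ : 0 < β)
    (p lam : ℕ → ℝ) (hp : ∀ j, 4 < p j) (hptop : Tendsto p atTop atTop)
    (hlam : ∀ j, lam j < 0)
    (hlim : Tendsto (fun j => (-lam j) ^ (1 / p j)) atTop (𝓝 β))
    (uj : ℕ → EuclideanSpace ℝ (Fin n) → ℝ)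
    (hujc : ∀ j, ContinuousOn (uj j) Ω) (hujpos : ∀ j, ∀ x ∈ Ω, 0 < uj j x)
    (hsol : ∀ j, IsViscSolPLap (p j) (lam j) Ω (uj j))
    (u : EuclideanSpace ℝ (Fin n) → ℝ) (hu : ContinuousOn u Ω) (hupos : ∀ x ∈ Ω, 0 < u x)
    (hconv : TendstoLocallyUniformlyOn uj u atTop Ω) :
    IsViscSolEig β Ω u :=
  limit_is_viscosity_solution_infinity_eigenvalue_general Ω hΩ β p lam hp hptop hlam hlim uj hujc
    hujpos hsol u hu hupos hconv
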